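/- Let n ≥ 4 be an even integer and Λ = Cay(D_{2n}, Ψ) with Ψ = {b, ab, ..., a^{n-1}b} ∪ {a^{n/2}}. The set N = {1, a^{n/2}, b, a^{n/2}b} induces a clique of size 4 in Λ, and 4 is the clique number of Λ. -/

import Mathlib

/-- The Cayley graph of a group with connection set `S`. -/
def cayley {G : Type*} [Group G] (S : Set G) : SimpleGraph G :=
  SimpleGraph.fromRel (fun x y => x⁻¹ * y ∈ S)

/-- The connection set `Ψ = {b, ab, …, a^{n-1}b} ∪ {a^{n/2}}` in the dihedral group. -/
def Psi (n : ℕ) : Set (DihedralGroup n) :=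
  {x | ∃ i : ZMod n, x = DihedralGroup.sr i} ∪ {DihedralGroup.r ((n / 2 : ℕ) : ZMod n)}

/-!
Since `n` is even, `a^{n/2}` is an involution, so `Ψ` is inverse-closed and `x ~ y` iff
`x⁻¹y ∈ Ψ`.
The only rotation in `Ψ` is `a^{n/2}`, so inside a coset of the rotation subgroup a vertex `x` has
the single neighbour `x a^{n/2}`: a clique meets each of the two cosets in at most two vertices.
In `N` every quotient `x⁻¹y` with `x ≠ y` is a reflection or `a^{n/2}`.
-/

open scoped Pointwise

section Cayley

variable {G : Type*} [Group G] {S : Set G}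

theorem cayley_adj_iff (hS : S⁻¹ = S) {x y : G} :
    (cayley S).Adj x y ↔ x ≠ y ∧ x⁻¹ * y ∈ S := by
  have : y⁻¹ * x ∈ S ↔ x⁻¹ * y ∈ S := by
    rw [← Set.inv_mem_inv, hS, mul_inv_rev, inv_inv]
  simp [cayley, this]

theorem cayley_eq_of_adj_of_adj (hS : S⁻¹ = S) {H : Subgroup G} (hSH : (S ∩ H).Subsingleton)
    {x y z : G} (hxy : (cayley S).Adj x y) (hxz : (cayley S).Adj x z)
    (hy : x⁻¹ * y ∈ H) (hz : x⁻¹ * z ∈ H) : y = z := by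
  rw [cayley_adj_iff hS] at hxy hxz
  exact mul_left_cancel (hSH ⟨hxy.2, hy⟩ ⟨hxz.2, hz⟩)

theorem SimpleGraph.IsClique.card_le_two_mul_index (hS : S⁻¹ = S) (H : Subgroup G)
    [H.FiniteIndex] (hSH : (S ∩ H).Subsingleton) {t : Finset G}
    (ht : (cayley S).IsClique (t : Set G)) : t.card ≤ 2 * H.index := by
  classical
  have hfibre : ∀ q ∈ t.image (QuotientGroup.mk : G → G ⧸ H),
      (t.filter fun x => (QuotientGroup.mk x : G ⧸ H) = q).card ≤ 2 := by
    intro q _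
    by_contra! h
    obtain ⟨x, hx, y, hy, z, hz, hxy, hxz, hyz⟩ := Finset.two_lt_card.1 h
    simp only [Finset.mem_filter] at hx hy hz
    refine hyz (cayley_eq_of_adj_of_adj hS hSH (ht hx.1 hy.1 hxy) (ht hx.1 hz.1 hxz) ?_ ?_)
    · exact QuotientGroup.eq.1 (hx.2.trans hy.2.symm)
    · exact QuotientGroup.eq.1 (hx.2.trans hz.2.symm)
  have := Fintype.ofFinite (G ⧸ H)
  calc t.card ≤ 2 * (t.image (QuotientGroup.mk : G → G ⧸ H)).card :=
        Finset.card_le_mul_card_image t 2 hfibre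
    _ ≤ 2 * H.index := by
      rw [Subgroup.index, Nat.card_eq_fintype_card]
      exact Nat.mul_le_mul_left 2 (Finset.card_le_univ _)

end Cayley

namespace DihedralGroup

variable {n : ℕ}

def rotations (n : ℕ) : Subgroup (DihedralGroup n) where
  carrier := Set.range r
  mul_mem' := by
    rintro _ _ ⟨i, rfl⟩ ⟨j, rfl⟩
    exact ⟨i + j, r_mul_r i j⟩
  one_mem' := ⟨0, r_zero⟩
  inv_mem' := by
    rintro _ ⟨i, rfl⟩
    exact ⟨-i, (inv_r i).symm⟩

theorem mem_rotations {x : DihedralGroup n} : x ∈ rotations n ↔ ∃ i, r i = x := Iff.rfl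

theorem index_rotations : (rotations n).index = 2 := by
  refine Subgroup.index_eq_two_iff.2 ⟨sr 0, ?_⟩
  rintro (i | i) <;> simp [mem_rotations, r_mul_sr, sr_mul_sr]

instance : (rotations n).FiniteIndex := ⟨by simp [index_rotations]⟩

end DihedralGroup

theorem ZMod.neg_natCast_half {n : ℕ} (hn : Even n) :
    -((n / 2 : ℕ) : ZMod n) = (n / 2 : ℕ) := by
  rw [neg_eq_iff_add_eq_zero, ← Nat.cast_add, ← two_mul, Nat.mul_div_cancel' hn.two_dvd,
    ZMod.natCast_self]

theorem ZMod.natCast_half_ne_zero {n : ℕ} (hn : 2 ≤ n) : ((n / 2 : ℕ) : ZMod n) ≠ 0 := by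
  rw [Ne, ZMod.natCast_eq_zero_iff]
  exact Nat.not_dvd_of_pos_of_lt (by omega) (by omega)

open DihedralGroup

section Psi

variable {n : ℕ}

theorem r_mem_Psi_iff {i : ZMod n} : r i ∈ Psi n ↔ i = ((n / 2 : ℕ) : ZMod n) := by
  simp [Psi]

theorem sr_mem_Psi (i : ZMod n) : sr i ∈ Psi n := Or.inl ⟨i, rfl⟩

theorem inv_Psi (hn : Even n) : (Psi n)⁻¹ = Psi n := by
  ext (i | i)
  · rw [Set.mem_inv, inv_r, r_mem_Psi_iff, r_mem_Psi_iff, neg_eq_iff_eq_neg,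
      ZMod.neg_natCast_half hn]
  · simp only [Set.mem_inv, inv_sr, sr_mem_Psi]

theorem Psi_inter_rotations_subsingleton : (Psi n ∩ rotations n).Subsingleton :=
  Set.subsingleton_singleton.anti <| by
    rintro _ ⟨hx, i, rfl⟩
    rw [r_mem_Psi_iff.1 hx]
    rfl

theorem isNClique_Psi (hn : 2 ≤ n) (hev : Even n) :
    (cayley (Psi n)).IsNClique 4
      ({1, r ((n / 2 : ℕ) : ZMod n), sr 0, r ((n / 2 : ℕ) : ZMod n) * sr 0} : Finset _) := by
  set c : ZMod n := ((n / 2 : ℕ) : ZMod n) with hc_def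
  have hc : c ≠ 0 := ZMod.natCast_half_ne_zero hn
  have hneg : -c = c := ZMod.neg_natCast_half hev
  rw [one_def, r_mul_sr, zero_sub, hneg]
  constructor
  · simp [-r_zero, SimpleGraph.isClique_iff, Set.pairwise_insert, cayley_adj_iff (inv_Psi hev),
      r_mem_Psi_iff, ← hc_def, sr_mem_Psi, hc, hc.symm, inv_r, inv_sr, r_mul_sr, sr_mul_sr, hneg]
  · simp [-r_zero, hc.symm]

end Psi

theorem cayley_clique_number (n : ℕ) (hn : 4 ≤ n) (hev : Even n) :
    (cayley (Psi n)).IsNClique 4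
      ({1, DihedralGroup.r ((n / 2 : ℕ) : ZMod n), DihedralGroup.sr 0,
        DihedralGroup.r ((n / 2 : ℕ) : ZMod n) * DihedralGroup.sr 0} : Finset (DihedralGroup n)) ∧
    (∀ t : Finset (DihedralGroup n), (cayley (Psi n)).IsClique ↑t → t.card ≤ 4) := by
  refine ⟨isNClique_Psi (by omega) hev, fun t ht => ?_⟩
  calc t.card ≤ 2 * (rotations n).index :=
        ht.card_le_two_mul_index (inv_Psi hev) _ Psi_inter_rotations_subsingleton
    _ = 4 := by rw [index_rotations]
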